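/- arXiv:2308.07584 — 2 statements merged into one kernel-verified Lean document; each statement's English description precedes it below -/
import Mathlib

section
/- Suppose 0<λ₁<C_{m₁,p}(Ω)^{−p} and 0<λ₂<C_{m₂,q}(Ω)^{−q}. Then for every (u,v)∈W with ‖(u,v)‖_W ≤ 1: φ(u,v) ≥ M_{(λ₁,λ₂)}·‖(u,v)‖_W^{max{p,q}} − M₂·‖(u,v)‖_W^{α+β} − (λ₁(p−γ₁)/(pγ₁))·‖h₁‖_{L^{p/(p−γ₁)}(Ω)}^{p/(p−γ₁)} − (λ₂(q−γ₂)/(qγ₂))·‖h₂‖_{L^{q/(q−γ₂)}(Ω)}^{q/(q−γ₂)}. -/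
open Finset Filter

/-- A locally finite weighted graph `G = (V, E)`: each vertex has a finite set of
neighbours, symmetric positive edge weights `w`, and a vertex measure `mu`
uniformly bounded below by a positive constant. -/
structure GraphSetting (V : Type) where
  nbr : V → Finset V
  w : V → V → ℝ
  mu : V → ℝ
  nbr_symm : ∀ x y, y ∈ nbr x ↔ x ∈ nbr y
  nbr_irrefl : ∀ x, x ∉ nbr x
  w_symm : ∀ x y, w x y = w y x
  w_pos : ∀ x y, y ∈ nbr x → 0 < w x y
  mu_bound : ∃ μ₀ > 0, ∀ x, μ₀ ≤ mu x

/-- Membership in `W₀^{m,s}(Ω)`: `f` vanishes outside `Ω`. -/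
def suppIn {V : Type} (Ω : Finset V) (f : V → ℝ) : Prop := ∀ x, x ∉ Ω → f x = 0

namespace GraphSetting

variable {V : Type} [DecidableEq V] (G : GraphSetting V)

/-- `∫_A f dμ = ∑_{x ∈ A} f(x) μ(x)`. -/
noncomputable def integral (A : Finset V) (f : V → ℝ) : ℝ := ∑ x ∈ A, f x * G.mu x

/-- The graph Laplacian `Δf(x) = (1/μ(x)) ∑_{y ∼ x} ω_{xy} (f(y) - f(x))`. -/
noncomputable def lap (f : V → ℝ) (x : V) : ℝ :=
  (1 / G.mu x) * ∑ y ∈ G.nbr x, G.w x y * (f y - f x)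

/-- The gradient form `Γ(f,g)(x)`. -/
noncomputable def gammaForm (f g : V → ℝ) (x : V) : ℝ :=
  (1 / (2 * G.mu x)) * ∑ y ∈ G.nbr x, G.w x y * (f y - f x) * (g y - g x)

/-- `|∇f|(x) = Γ(f,f)(x)^{1/2}`. -/
noncomputable def gradLen (f : V → ℝ) (x : V) : ℝ := Real.sqrt (G.gammaForm f f x)

/-- `|∇^m f|`: `|∇ Δ^{(m-1)/2} f|` for odd `m`, `|Δ^{m/2} f|` for even `m`. -/
noncomputable def gradm (m : ℕ) (f : V → ℝ) (x : V) : ℝ :=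
  if m % 2 = 1 then G.gradLen (G.lap^[(m - 1) / 2] f) x else |(G.lap^[m / 2] f) x|

/-- The boundary `∂Ω = {y ∉ Ω | ∃ x ∈ Ω, xy ∈ E}`. -/
noncomputable def bdry (Ω : Finset V) : Finset V := Ω.biUnion G.nbr \ Ω

/-- The Sobolev norm `‖f‖_{W₀^{m,s}(Ω)} = (∫_{Ω ∪ ∂Ω} |∇^m f|^s dμ)^{1/s}`. -/
noncomputable def sobNorm (Ω bΩ : Finset V) (m : ℕ) (s : ℝ) (f : V → ℝ) : ℝ :=
  (∑ x ∈ Ω ∪ bΩ, G.gradm m f x ^ s * G.mu x) ^ (1 / s)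

/-- `‖f‖_{L^r(A)} = (∫_A |f|^r dμ)^{1/r}`. -/
noncomputable def lpNorm (A : Finset V) (r : ℝ) (f : V → ℝ) : ℝ :=
  (∑ x ∈ A, |f x| ^ r * G.mu x) ^ (1 / r)

/-- The weak form `B(u,φ) = ∫_Ω (£_{m,s} u) φ dμ` of the poly-Laplacian `£_{m,s}`. -/
noncomputable def bform (Ω bΩ : Finset V) (m : ℕ) (s : ℝ) (u φ : V → ℝ) : ℝ :=
  ∑ x ∈ Ω ∪ bΩ,
    G.gradm m u x ^ (s - 2) *
      (if m % 2 = 1 then G.gammaForm (G.lap^[(m - 1) / 2] u) (G.lap^[(m - 1) / 2] φ) x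
       else (G.lap^[m / 2] u) x * (G.lap^[m / 2] φ) x) * G.mu x

/-- The energy functional `φ(u,v)` of the poly-Laplacian system (2.1). -/
noncomputable def energySys (Ω bΩ : Finset V) (m₁ m₂ : ℕ)
    (p q γ₁ γ₂ lam₁ lam₂ α β : ℝ) (h₁ h₂ c : V → ℝ) (u v : V → ℝ) : ℝ :=
  (1 / p) * G.integral (Ω ∪ bΩ) (fun x => G.gradm m₁ u x ^ p)
    - (lam₁ / γ₁) * G.integral Ω (fun x => h₁ x * |u x| ^ γ₁)
    + (1 / q) * G.integral (Ω ∪ bΩ) (fun x => G.gradm m₂ v x ^ q)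
    - (lam₂ / γ₂) * G.integral Ω (fun x => h₂ x * |v x| ^ γ₂)
    - (1 / (α + β)) * G.integral Ω (fun x => c x * |u x| ^ α * |v x| ^ β)

/-- `(u,v)` is a weak solution of the poly-Laplacian system (1.4)
(equivalently, a critical point of the energy functional `φ`). -/
def isWeakSolSys (Ω bΩ : Finset V) (m₁ m₂ : ℕ)
    (p q γ₁ γ₂ lam₁ lam₂ α β : ℝ) (h₁ h₂ c : V → ℝ) (u v : V → ℝ) : Prop :=
  (∀ φ : V → ℝ, suppIn Ω φ →
      G.bform Ω bΩ m₁ p u φ =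
        lam₁ * G.integral Ω (fun x => h₁ x * |u x| ^ (γ₁ - 2) * u x * φ x)
        + α / (α + β) * G.integral Ω (fun x => c x * |u x| ^ (α - 2) * u x * |v x| ^ β * φ x)) ∧
  (∀ ψ : V → ℝ, suppIn Ω ψ →
      G.bform Ω bΩ m₂ q v ψ =
        lam₂ * G.integral Ω (fun x => h₂ x * |v x| ^ (γ₂ - 2) * v x * ψ x)
        + β / (α + β) * G.integral Ω (fun x => c x * |u x| ^ α * |v x| ^ (β - 2) * v x * ψ x))

/-- The derivative `⟨φ'(u,v), (φ,ψ)⟩` of the energy functional of the system (2.2). -/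
noncomputable def energyDerivSys (Ω bΩ : Finset V) (m₁ m₂ : ℕ)
    (p q γ₁ γ₂ lam₁ lam₂ α β : ℝ) (h₁ h₂ c : V → ℝ) (u v φ ψ : V → ℝ) : ℝ :=
  G.bform Ω bΩ m₁ p u φ
    - lam₁ * G.integral Ω (fun x => h₁ x * |u x| ^ (γ₁ - 2) * u x * φ x)
    + G.bform Ω bΩ m₂ q v ψ
    - lam₂ * G.integral Ω (fun x => h₂ x * |v x| ^ (γ₂ - 2) * v x * ψ x)
    - α / (α + β) * G.integral Ω (fun x => c x * |u x| ^ (α - 2) * u x * |v x| ^ β * φ x)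
    - β / (α + β) * G.integral Ω (fun x => c x * |u x| ^ α * |v x| ^ (β - 2) * v x * ψ x)

/-- The energy functional `J(u)` of the single poly-Laplacian equation (1.5). -/
noncomputable def energyEq (Ω bΩ : Finset V) (m : ℕ)
    (p γ lam α : ℝ) (h c : V → ℝ) (u : V → ℝ) : ℝ :=
  (1 / p) * G.sobNorm Ω bΩ m p u ^ p
    - lam / γ * G.integral Ω (fun x => h x * |u x| ^ γ)
    - (1 / α) * G.integral Ω (fun x => c x * |u x| ^ α)

/-- `u` is a weak solution of the single equation `£_{m,p} u = λ h |u|^{γ-2} u + c |u|^{α-2} u`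
(equivalently, a critical point of `J`). -/
def isWeakSolEq (Ω bΩ : Finset V) (m : ℕ)
    (p γ lam α : ℝ) (h c : V → ℝ) (u : V → ℝ) : Prop :=
  ∀ φ : V → ℝ, suppIn Ω φ →
    G.bform Ω bΩ m p u φ =
      lam * G.integral Ω (fun x => h x * |u x| ^ (γ - 2) * u x * φ x)
      + G.integral Ω (fun x => c x * |u x| ^ (α - 2) * u x * φ x)

section FiniteGraph

variable [Fintype V]

/-- `∫_V f dμ` on a finite graph. -/
noncomputable def integralV (f : V → ℝ) : ℝ := ∑ x, f x * G.mu x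

/-- `‖f‖_{L^r(V)}` on a finite graph. -/
noncomputable def lpNormV (r : ℝ) (f : V → ℝ) : ℝ :=
  (∑ x, |f x| ^ r * G.mu x) ^ (1 / r)

/-- `‖f‖_{W^{m,s}(V)} = (∫_V (|∇^m f|^s + a |f|^s) dμ)^{1/s}` with potential `a`. -/
noncomputable def sobNormV (m : ℕ) (s : ℝ) (a f : V → ℝ) : ℝ :=
  (∑ x, (G.gradm m f x ^ s + a x * |f x| ^ s) * G.mu x) ^ (1 / s)

/-- The weak form `∫_V (£_{m,s} u) φ dμ` on a finite graph. -/
noncomputable def bformV (m : ℕ) (s : ℝ) (u φ : V → ℝ) : ℝ :=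
  ∑ x,
    G.gradm m u x ^ (s - 2) *
      (if m % 2 = 1 then G.gammaForm (G.lap^[(m - 1) / 2] u) (G.lap^[(m - 1) / 2] φ) x
       else (G.lap^[m / 2] u) x * (G.lap^[m / 2] φ) x) * G.mu x

/-- The energy functional `φ_V(u,v)` of the system (5.1) on a finite graph. -/
noncomputable def energySysV (m₁ m₂ : ℕ)
    (p q γ₁ γ₂ lam₁ lam₂ α β : ℝ) (a b h₁ h₂ c : V → ℝ) (u v : V → ℝ) : ℝ :=
  (1 / p) * G.integralV (fun x => G.gradm m₁ u x ^ p + a x * |u x| ^ p)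
    - (lam₁ / γ₁) * G.integralV (fun x => h₁ x * |u x| ^ γ₁)
    + (1 / q) * G.integralV (fun x => G.gradm m₂ v x ^ q + b x * |v x| ^ q)
    - (lam₂ / γ₂) * G.integralV (fun x => h₂ x * |v x| ^ γ₂)
    - (1 / (α + β)) * G.integralV (fun x => c x * |u x| ^ α * |v x| ^ β)

/-- `(u,v)` is a weak solution of the system (5.1), i.e. a critical point of `φ_V`. -/
def isWeakSolSysV (m₁ m₂ : ℕ)
    (p q γ₁ γ₂ lam₁ lam₂ α β : ℝ) (a b h₁ h₂ c : V → ℝ) (u v : V → ℝ) : Prop :=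
  (∀ φ : V → ℝ,
      G.bformV m₁ p u φ + G.integralV (fun x => a x * |u x| ^ (p - 2) * u x * φ x) =
        lam₁ * G.integralV (fun x => h₁ x * |u x| ^ (γ₁ - 2) * u x * φ x)
        + α / (α + β) * G.integralV (fun x => c x * |u x| ^ (α - 2) * u x * |v x| ^ β * φ x)) ∧
  (∀ ψ : V → ℝ,
      G.bformV m₂ q v ψ + G.integralV (fun x => b x * |v x| ^ (q - 2) * v x * ψ x) =
        lam₂ * G.integralV (fun x => h₂ x * |v x| ^ (γ₂ - 2) * v x * ψ x)
        + β / (α + β) * G.integralV (fun x => c x * |u x| ^ α * |v x| ^ (β - 2) * v x * ψ x))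

/-- The energy functional `J_V(u)` of the single equation (5.2) on a finite graph. -/
noncomputable def energyEqV (m : ℕ)
    (p γ lam α : ℝ) (a h c : V → ℝ) (u : V → ℝ) : ℝ :=
  (1 / p) * G.sobNormV m p a u ^ p
    - lam / γ * G.integralV (fun x => h x * |u x| ^ γ)
    - (1 / α) * G.integralV (fun x => c x * |u x| ^ α)

/-- `u` is a weak solution of `£_{m,p} u + a|u|^{p-2}u = λ h |u|^{γ-2} u + c |u|^{α-2} u` on `V`,
i.e. a critical point of `J_V`. -/
def isWeakSolEqV (m : ℕ)
    (p γ lam α : ℝ) (a h c : V → ℝ) (u : V → ℝ) : Prop :=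
  ∀ φ : V → ℝ,
    G.bformV m p u φ + G.integralV (fun x => a x * |u x| ^ (p - 2) * u x * φ x) =
      lam * G.integralV (fun x => h x * |u x| ^ (γ - 2) * u x * φ x)
      + G.integralV (fun x => c x * |u x| ^ (α - 2) * u x * φ x)

end FiniteGraph

end GraphSetting


private lemma rpow_one_div_rpow {S s : ℝ} (hS : 0 ≤ S) (hs : s ≠ 0) : (S ^ (1/s)) ^ s = S := by
  rw [← Real.rpow_mul hS, one_div, inv_mul_cancel₀ hs, Real.rpow_one]

private lemma two_rpow_aux {x y M : ℝ} (hx : 0 ≤ x) (hy : 0 ≤ y) (hM : 1 ≤ M) :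
    (2:ℝ)^(1-M) * (x+y)^M ≤ x^M + y^M := by
  have h := NNReal.rpow_add_le_mul_rpow_add_rpow x.toNNReal y.toNNReal hM
  have hR : (x+y)^M ≤ 2^(M-1) * (x^M + y^M) := by
    have h2 := (NNReal.coe_le_coe.2 h)
    push_cast at h2
    rwa [Real.coe_toNNReal _ hx, Real.coe_toNNReal _ hy] at h2
  have h20 : (0:ℝ) < 2^(1-M) := Real.rpow_pos_of_pos two_pos _
  have hmul : (2:ℝ)^(1-M) * 2^(M-1) = 1 := by
    rw [← Real.rpow_add two_pos]; norm_num
  calc (2:ℝ)^(1-M)*(x+y)^M ≤ 2^(1-M)*(2^(M-1)*(x^M+y^M)) :=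
        mul_le_mul_of_nonneg_left hR h20.le
    _ = x^M+y^M := by rw [← mul_assoc, hmul, one_mul]

private lemma aux_mu_pos {V : Type} (G : GraphSetting V) (x : V) : 0 < G.mu x := by
  obtain ⟨μ₀, h0, h⟩ := G.mu_bound; exact lt_of_lt_of_le h0 (h x)

private lemma aux_gradm_nonneg {V : Type} [DecidableEq V] (G : GraphSetting V)
    (m : ℕ) (f : V → ℝ) (x : V) : 0 ≤ G.gradm m f x := by
  unfold GraphSetting.gradm GraphSetting.gradLen
  split_ifs
  · exact Real.sqrt_nonneg _
  · exact abs_nonneg _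

private lemma aux_sobNorm_nonneg {V : Type} [DecidableEq V] (G : GraphSetting V)
    (Ω bΩ : Finset V) (m : ℕ) (s : ℝ) (f : V → ℝ) : 0 ≤ G.sobNorm Ω bΩ m s f :=
  Real.rpow_nonneg (Finset.sum_nonneg fun x _ =>
    mul_nonneg (Real.rpow_nonneg (aux_gradm_nonneg G m f x) s) (aux_mu_pos G x).le) _

private lemma aux_lpNorm_nonneg {V : Type} [DecidableEq V] (G : GraphSetting V)
    (A : Finset V) (r : ℝ) (f : V → ℝ) : 0 ≤ G.lpNorm A r f :=
  Real.rpow_nonneg (Finset.sum_nonneg fun x _ =>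
    mul_nonneg (Real.rpow_nonneg (abs_nonneg (f x)) r) (aux_mu_pos G x).le) _

private lemma aux_sobNorm_rpow {V : Type} [DecidableEq V] (G : GraphSetting V)
    (Ω bΩ : Finset V) (m : ℕ) {s : ℝ} (hs : s ≠ 0) (f : V → ℝ) :
    G.sobNorm Ω bΩ m s f ^ s = ∑ x ∈ Ω ∪ bΩ, G.gradm m f x ^ s * G.mu x :=
  rpow_one_div_rpow (Finset.sum_nonneg fun x _ =>
    mul_nonneg (Real.rpow_nonneg (aux_gradm_nonneg G m f x) s) (aux_mu_pos G x).le) hs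

private lemma aux_lpNorm_rpow {V : Type} [DecidableEq V] (G : GraphSetting V)
    (A : Finset V) {r : ℝ} (hr : r ≠ 0) (f : V → ℝ) :
    G.lpNorm A r f ^ r = ∑ x ∈ A, |f x| ^ r * G.mu x :=
  rpow_one_div_rpow (Finset.sum_nonneg fun x _ =>
    mul_nonneg (Real.rpow_nonneg (abs_nonneg (f x)) r) (aux_mu_pos G x).le) hr

private lemma aux_split_sum {V : Type} (G : GraphSetting V) (Ω : Finset V)
    (a b : ℝ) (f g : V → ℝ) :
    ∑ x ∈ Ω, (a * f x + b * g x) * G.mu x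
      = a * ∑ x ∈ Ω, f x * G.mu x + b * ∑ x ∈ Ω, g x * G.mu x := by
  rw [Finset.mul_sum, Finset.mul_sum, ← Finset.sum_add_distrib]
  exact Finset.sum_congr rfl fun x _ => by ring

/-- Estimate (3.5): lower bound for the energy functional inside the unit ball. -/
theorem energy_lower_bound_in_unit_ball
    {V : Type} [DecidableEq V] (G : GraphSetting V)
    (Ω : Finset V) (hΩ : Ω.Nonempty) (hbΩ : (G.bdry Ω).Nonempty)
    (m₁ m₂ : ℕ) (hm₁ : 0 < m₁) (hm₂ : 0 < m₂)
    (p q γ₁ γ₂ lam₁ lam₂ α β : ℝ)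
    (hp : 1 < p) (hq : 1 < q) (hγ₁ : 1 < γ₁) (hγ₂ : 1 < γ₂)
    (hα : 0 < α) (hβ : 0 < β)
    (hγpq : max γ₁ γ₂ < min p q) (hpqαβ : max p q < α + β)
    (h₁ h₂ c : V → ℝ)
    (hh₁ : ∀ x ∈ Ω, 0 < h₁ x) (hh₂ : ∀ x ∈ Ω, 0 < h₂ x) (hc : ∀ x ∈ Ω, 0 < c x)
    (C₁ C₂ : ℝ) (hC₁ : 0 < C₁) (hC₂ : 0 < C₂)
    (hemb₁ : ∀ r : ℝ, 1 ≤ r → ∀ u : V → ℝ, suppIn Ω u →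
      G.lpNorm Ω r u ≤ C₁ * G.sobNorm Ω (G.bdry Ω) m₁ p u)
    (hemb₂ : ∀ r : ℝ, 1 ≤ r → ∀ v : V → ℝ, suppIn Ω v →
      G.lpNorm Ω r v ≤ C₂ * G.sobNorm Ω (G.bdry Ω) m₂ q v)
    (C₀ M1 M2 : ℝ) (hC₀ : C₀ = Ω.sup' hΩ c)
    (hM1 : M1 = (2 : ℝ) ^ (1 - max p q) *
      min ((1 - lam₁ * C₁ ^ p) / p) ((1 - lam₂ * C₂ ^ q) / q))
    (hM2 : M2 = C₀ / (α + β) ^ 2 * (α * C₁ ^ (α + β) + β * C₂ ^ (α + β)))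
    (hlam₁ : 0 < lam₁) (hlam₁' : lam₁ < C₁ ^ (-p))
    (hlam₂ : 0 < lam₂) (hlam₂' : lam₂ < C₂ ^ (-q)) :
    ∀ u v : V → ℝ, suppIn Ω u → suppIn Ω v →
      G.sobNorm Ω (G.bdry Ω) m₁ p u + G.sobNorm Ω (G.bdry Ω) m₂ q v ≤ 1 →
      M1 * (G.sobNorm Ω (G.bdry Ω) m₁ p u + G.sobNorm Ω (G.bdry Ω) m₂ q v) ^ max p q
        - M2 * (G.sobNorm Ω (G.bdry Ω) m₁ p u + G.sobNorm Ω (G.bdry Ω) m₂ q v) ^ (α + β)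
        - lam₁ * (p - γ₁) / (p * γ₁) * G.lpNorm Ω (p / (p - γ₁)) h₁ ^ (p / (p - γ₁))
        - lam₂ * (q - γ₂) / (q * γ₂) * G.lpNorm Ω (q / (q - γ₂)) h₂ ^ (q / (q - γ₂))
      ≤ G.energySys Ω (G.bdry Ω) m₁ m₂ p q γ₁ γ₂ lam₁ lam₂ α β h₁ h₂ c u v := by
  intro u v hu hv hball
  have hp0 : (0:ℝ) < p := lt_trans one_pos hp
  have hq0 : (0:ℝ) < q := lt_trans one_pos hq
  have hγ₁0 : (0:ℝ) < γ₁ := lt_trans one_pos hγ₁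
  have hγ₂0 : (0:ℝ) < γ₂ := lt_trans one_pos hγ₂
  have hγ₁p : γ₁ < p := lt_of_le_of_lt (le_max_left γ₁ γ₂) (lt_of_lt_of_le hγpq (min_le_left p q))
  have hγ₂q : γ₂ < q := lt_of_le_of_lt (le_max_right γ₁ γ₂) (lt_of_lt_of_le hγpq (min_le_right p q))
  have hαβ0 : (0:ℝ) < α + β := by positivity
  have hM : (1:ℝ) ≤ max p q := le_trans hp.le (le_max_left p q)
  have hαβ1 : (1:ℝ) ≤ α + β := le_trans hM hpqαβ.le
  have hmu : ∀ x, 0 < G.mu x := aux_mu_pos G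
  set A := G.sobNorm Ω (G.bdry Ω) m₁ p u with hAdef
  set B := G.sobNorm Ω (G.bdry Ω) m₂ q v with hBdef
  have hA0 : 0 ≤ A := aux_sobNorm_nonneg G _ _ _ _ _
  have hB0 : 0 ≤ B := aux_sobNorm_nonneg G _ _ _ _ _
  have hAp : A ^ p = ∑ x ∈ Ω ∪ G.bdry Ω, G.gradm m₁ u x ^ p * G.mu x :=
    aux_sobNorm_rpow G _ _ _ hp0.ne' u
  have hBq : B ^ q = ∑ x ∈ Ω ∪ G.bdry Ω, G.gradm m₂ v x ^ q * G.mu x :=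
    aux_sobNorm_rpow G _ _ _ hq0.ne' v
  -- embedding bounds
  have embed : ∀ r : ℝ, 1 ≤ r →
      (∑ x ∈ Ω, |u x| ^ r * G.mu x ≤ C₁ ^ r * A ^ r) ∧
      (∑ x ∈ Ω, |v x| ^ r * G.mu x ≤ C₂ ^ r * B ^ r) := by
    intro r hr
    have hr0 : (0:ℝ) < r := lt_of_lt_of_le one_pos hr
    constructor
    · have h2 : G.lpNorm Ω r u ^ r ≤ (C₁ * A) ^ r :=
        Real.rpow_le_rpow (aux_lpNorm_nonneg G _ _ _) (hemb₁ r hr u hu) hr0.le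
      rwa [aux_lpNorm_rpow G _ hr0.ne' u, Real.mul_rpow hC₁.le hA0] at h2
    · have h2 : G.lpNorm Ω r v ^ r ≤ (C₂ * B) ^ r :=
        Real.rpow_le_rpow (aux_lpNorm_nonneg G _ _ _) (hemb₂ r hr v hv) hr0.le
      rwa [aux_lpNorm_rpow G _ hr0.ne' v, Real.mul_rpow hC₂.le hB0] at h2
  have hup := (embed p hp.le).1
  have hvq := (embed q hq.le).2
  have huαβ := (embed (α+β) hαβ1).1
  have hvαβ := (embed (α+β) hαβ1).2
  -- subcritical-term bound for u
  have hE1 : lam₁/γ₁ * (∑ x ∈ Ω, (h₁ x * |u x| ^ γ₁) * G.mu x)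
      ≤ lam₁ * C₁ ^ p / p * A ^ p
        + lam₁ * (p - γ₁) / (p * γ₁) * G.lpNorm Ω (p/(p-γ₁)) h₁ ^ (p/(p-γ₁)) := by
    have hpγ : (0:ℝ) < p - γ₁ := by linarith
    have hr₁0 : p / (p - γ₁) ≠ 0 := by positivity
    have hpt : ∀ x ∈ Ω, h₁ x * |u x| ^ γ₁
        ≤ (p-γ₁)/p * h₁ x ^ (p/(p-γ₁)) + γ₁/p * |u x| ^ p := by
      intro x hx
      have h1x := (hh₁ x hx).le
      have key := Real.geom_mean_le_arith_mean2_weighted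
        (by positivity : (0:ℝ) ≤ (p-γ₁)/p) (by positivity : (0:ℝ) ≤ γ₁/p)
        (Real.rpow_nonneg h1x (p/(p-γ₁))) (Real.rpow_nonneg (abs_nonneg (u x)) p)
        (by field_simp; ring)
      calc h₁ x * |u x| ^ γ₁
          = (h₁ x ^ (p/(p-γ₁))) ^ ((p-γ₁)/p) * (|u x| ^ p) ^ (γ₁/p) := by
            rw [← Real.rpow_mul h1x, ← Real.rpow_mul (abs_nonneg _),
              show p/(p-γ₁) * ((p-γ₁)/p) = 1 by field_simp,
              show p * (γ₁/p) = γ₁ by field_simp, Real.rpow_one]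
        _ ≤ _ := key
    have hsum : ∑ x ∈ Ω, (h₁ x * |u x| ^ γ₁) * G.mu x
        ≤ (p-γ₁)/p * (∑ x ∈ Ω, |h₁ x| ^ (p/(p-γ₁)) * G.mu x)
          + γ₁/p * (∑ x ∈ Ω, |u x| ^ p * G.mu x) := by
      rw [← aux_split_sum]
      refine Finset.sum_le_sum fun x hx => ?_
      rw [abs_of_pos (hh₁ x hx)]
      exact mul_le_mul_of_nonneg_right (hpt x hx) (hmu x).le
    rw [← aux_lpNorm_rpow G _ hr₁0 h₁] at hsum
    have hstep : ∑ x ∈ Ω, (h₁ x * |u x| ^ γ₁) * G.mu x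
        ≤ (p-γ₁)/p * G.lpNorm Ω (p/(p-γ₁)) h₁ ^ (p/(p-γ₁)) + γ₁/p * (C₁ ^ p * A ^ p) := by
      have := mul_le_mul_of_nonneg_left hup (show (0:ℝ) ≤ γ₁/p by positivity)
      linarith
    have hfin := mul_le_mul_of_nonneg_left hstep (show (0:ℝ) ≤ lam₁/γ₁ by positivity)
    refine hfin.trans (le_of_eq ?_)
    field_simp
    ring
  -- subcritical-term bound for v
  have hE2 : lam₂/γ₂ * (∑ x ∈ Ω, (h₂ x * |v x| ^ γ₂) * G.mu x)
      ≤ lam₂ * C₂ ^ q / q * B ^ q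
        + lam₂ * (q - γ₂) / (q * γ₂) * G.lpNorm Ω (q/(q-γ₂)) h₂ ^ (q/(q-γ₂)) := by
    have hpγ : (0:ℝ) < q - γ₂ := by linarith
    have hr₁0 : q / (q - γ₂) ≠ 0 := by positivity
    have hpt : ∀ x ∈ Ω, h₂ x * |v x| ^ γ₂
        ≤ (q-γ₂)/q * h₂ x ^ (q/(q-γ₂)) + γ₂/q * |v x| ^ q := by
      intro x hx
      have h1x := (hh₂ x hx).le
      have key := Real.geom_mean_le_arith_mean2_weighted
        (by positivity : (0:ℝ) ≤ (q-γ₂)/q) (by positivity : (0:ℝ) ≤ γ₂/q)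
        (Real.rpow_nonneg h1x (q/(q-γ₂))) (Real.rpow_nonneg (abs_nonneg (v x)) q)
        (by field_simp; ring)
      calc h₂ x * |v x| ^ γ₂
          = (h₂ x ^ (q/(q-γ₂))) ^ ((q-γ₂)/q) * (|v x| ^ q) ^ (γ₂/q) := by
            rw [← Real.rpow_mul h1x, ← Real.rpow_mul (abs_nonneg _),
              show q/(q-γ₂) * ((q-γ₂)/q) = 1 by field_simp,
              show q * (γ₂/q) = γ₂ by field_simp, Real.rpow_one]
        _ ≤ _ := key
    have hsum : ∑ x ∈ Ω, (h₂ x * |v x| ^ γ₂) * G.mu x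
        ≤ (q-γ₂)/q * (∑ x ∈ Ω, |h₂ x| ^ (q/(q-γ₂)) * G.mu x)
          + γ₂/q * (∑ x ∈ Ω, |v x| ^ q * G.mu x) := by
      rw [← aux_split_sum]
      refine Finset.sum_le_sum fun x hx => ?_
      rw [abs_of_pos (hh₂ x hx)]
      exact mul_le_mul_of_nonneg_right (hpt x hx) (hmu x).le
    rw [← aux_lpNorm_rpow G _ hr₁0 h₂] at hsum
    have hstep : ∑ x ∈ Ω, (h₂ x * |v x| ^ γ₂) * G.mu x
        ≤ (q-γ₂)/q * G.lpNorm Ω (q/(q-γ₂)) h₂ ^ (q/(q-γ₂)) + γ₂/q * (C₂ ^ q * B ^ q) := by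
      have := mul_le_mul_of_nonneg_left hvq (show (0:ℝ) ≤ γ₂/q by positivity)
      linarith
    have hfin := mul_le_mul_of_nonneg_left hstep (show (0:ℝ) ≤ lam₂/γ₂ by positivity)
    refine hfin.trans (le_of_eq ?_)
    field_simp
    ring
  -- coupling-term bound
  have hC₀pos : 0 < C₀ := by
    obtain ⟨x₀, hx₀⟩ := hΩ
    rw [hC₀]
    exact lt_of_lt_of_le (hc x₀ hx₀) (Finset.le_sup' c hx₀)
  have hE3 : 1/(α+β) * (∑ x ∈ Ω, (c x * |u x| ^ α * |v x| ^ β) * G.mu x)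
      ≤ M2 * (A+B)^(α+β) := by
    have hpt : ∀ x ∈ Ω, c x * |u x| ^ α * |v x| ^ β
        ≤ C₀ * (α/(α+β)) * |u x|^(α+β) + C₀ * (β/(α+β)) * |v x|^(α+β) := by
      intro x hx
      have hy : |u x|^α * |v x|^β
          ≤ α/(α+β) * |u x|^(α+β) + β/(α+β) * |v x|^(α+β) := by
        have key := Real.geom_mean_le_arith_mean2_weighted
          (by positivity : (0:ℝ) ≤ α/(α+β)) (by positivity : (0:ℝ) ≤ β/(α+β))
          (Real.rpow_nonneg (abs_nonneg (u x)) (α+β))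
          (Real.rpow_nonneg (abs_nonneg (v x)) (α+β)) (by field_simp)
        calc |u x|^α * |v x|^β
            = (|u x|^(α+β))^(α/(α+β)) * (|v x|^(α+β))^(β/(α+β)) := by
              rw [← Real.rpow_mul (abs_nonneg _), ← Real.rpow_mul (abs_nonneg _),
                show (α+β)*(α/(α+β)) = α by field_simp,
                show (α+β)*(β/(α+β)) = β by field_simp]
          _ ≤ _ := key
      have hcx : c x ≤ C₀ := hC₀ ▸ Finset.le_sup' c hx
      have h0uv : (0:ℝ) ≤ |u x|^α * |v x|^β := by positivity
      calc c x * |u x| ^ α * |v x| ^ β = c x * (|u x|^α * |v x|^β) := by ring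
        _ ≤ C₀ * (α/(α+β) * |u x|^(α+β) + β/(α+β) * |v x|^(α+β)) :=
            mul_le_mul hcx hy h0uv hC₀pos.le
        _ = C₀ * (α/(α+β)) * |u x|^(α+β) + C₀ * (β/(α+β)) * |v x|^(α+β) := by ring
    have hsum : ∑ x ∈ Ω, (c x * |u x| ^ α * |v x| ^ β) * G.mu x
        ≤ C₀ * (α/(α+β)) * (∑ x ∈ Ω, |u x|^(α+β) * G.mu x)
          + C₀ * (β/(α+β)) * (∑ x ∈ Ω, |v x|^(α+β) * G.mu x) := by
      rw [← aux_split_sum]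
      exact Finset.sum_le_sum fun x hx => mul_le_mul_of_nonneg_right (hpt x hx) (hmu x).le
    have hu' : ∑ x ∈ Ω, |u x|^(α+β) * G.mu x ≤ C₁^(α+β) * (A+B)^(α+β) := by
      refine huαβ.trans (mul_le_mul_of_nonneg_left ?_ (Real.rpow_nonneg hC₁.le _))
      exact Real.rpow_le_rpow hA0 (le_add_of_nonneg_right hB0) hαβ0.le
    have hv' : ∑ x ∈ Ω, |v x|^(α+β) * G.mu x ≤ C₂^(α+β) * (A+B)^(α+β) := by
      refine hvαβ.trans (mul_le_mul_of_nonneg_left ?_ (Real.rpow_nonneg hC₂.le _))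
      exact Real.rpow_le_rpow hB0 (le_add_of_nonneg_left hA0) hαβ0.le
    have hw1 : (0:ℝ) ≤ C₀ * (α/(α+β)) := by positivity
    have hw2 : (0:ℝ) ≤ C₀ * (β/(α+β)) := by positivity
    have hstep : ∑ x ∈ Ω, (c x * |u x| ^ α * |v x| ^ β) * G.mu x
        ≤ C₀ * (α/(α+β)) * (C₁^(α+β) * (A+B)^(α+β))
          + C₀ * (β/(α+β)) * (C₂^(α+β) * (A+B)^(α+β)) := by
      have t1 := mul_le_mul_of_nonneg_left hu' hw1
      have t2 := mul_le_mul_of_nonneg_left hv' hw2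
      linarith
    have hfin := mul_le_mul_of_nonneg_left hstep (show (0:ℝ) ≤ 1/(α+β) by positivity)
    refine hfin.trans (le_of_eq ?_)
    rw [hM2]
    field_simp
  -- main coercive term
  have hCp : (0:ℝ) < C₁ ^ p := Real.rpow_pos_of_pos hC₁ p
  have hCq : (0:ℝ) < C₂ ^ q := Real.rpow_pos_of_pos hC₂ q
  have hl1 : lam₁ * C₁ ^ p < 1 := by
    rw [Real.rpow_neg hC₁.le] at hlam₁'
    calc lam₁ * C₁^p < (C₁^p)⁻¹ * C₁^p := mul_lt_mul_of_pos_right hlam₁' hCp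
      _ = 1 := inv_mul_cancel₀ hCp.ne'
  have hl2 : lam₂ * C₂ ^ q < 1 := by
    rw [Real.rpow_neg hC₂.le] at hlam₂'
    calc lam₂ * C₂^q < (C₂^q)⁻¹ * C₂^q := mul_lt_mul_of_pos_right hlam₂' hCq
      _ = 1 := inv_mul_cancel₀ hCq.ne'
  have hc₁0 : (0:ℝ) < (1 - lam₁ * C₁ ^ p) / p := by
    apply div_pos <;> linarith
  have hc₂0 : (0:ℝ) < (1 - lam₂ * C₂ ^ q) / q := by
    apply div_pos <;> linarith
  set m := min ((1 - lam₁ * C₁ ^ p) / p) ((1 - lam₂ * C₂ ^ q) / q) with hmdef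
  have hm0 : 0 < m := lt_min hc₁0 hc₂0
  have hA1 : A ≤ 1 := by linarith
  have hB1 : B ≤ 1 := by linarith
  have hMpos : (0:ℝ) < max p q := lt_of_lt_of_le one_pos hM
  have hApM : A ^ max p q ≤ A ^ p := by
    rcases eq_or_lt_of_le hA0 with h|h
    · rw [← h, Real.zero_rpow hMpos.ne', Real.zero_rpow hp0.ne']
    · exact Real.rpow_le_rpow_of_exponent_ge h hA1 (le_max_left p q)
  have hBqM : B ^ max p q ≤ B ^ q := by
    rcases eq_or_lt_of_le hB0 with h|h
    · rw [← h, Real.zero_rpow hMpos.ne', Real.zero_rpow hq0.ne']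
    · exact Real.rpow_le_rpow_of_exponent_ge h hB1 (le_max_right p q)
  have hE4 : M1 * (A+B) ^ max p q
      ≤ (1 - lam₁ * C₁ ^ p) / p * A ^ p + (1 - lam₂ * C₂ ^ q) / q * B ^ q := by
    have h2 := two_rpow_aux hA0 hB0 hM
    have hmono := mul_le_mul_of_nonneg_left h2 hm0.le
    have t1 : m * A ^ max p q ≤ (1 - lam₁ * C₁ ^ p) / p * A ^ p :=
      mul_le_mul (min_le_left _ _) hApM (Real.rpow_nonneg hA0 _) hc₁0.le
    have t2 : m * B ^ max p q ≤ (1 - lam₂ * C₂ ^ q) / q * B ^ q :=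
      mul_le_mul (min_le_right _ _) hBqM (Real.rpow_nonneg hB0 _) hc₂0.le
    have hM1' : M1 * (A+B) ^ max p q = m * ((2:ℝ)^(1 - max p q) * (A+B) ^ max p q) := by
      rw [hM1]; ring
    rw [hM1']
    calc m * ((2:ℝ)^(1 - max p q) * (A+B) ^ max p q)
        ≤ m * (A ^ max p q + B ^ max p q) := hmono
      _ = m * A ^ max p q + m * B ^ max p q := by ring
      _ ≤ _ := add_le_add t1 t2
  -- assemble
  simp only [GraphSetting.energySys, GraphSetting.integral]
  rw [← hAp, ← hBq]
  have e1 : (1 - lam₁ * C₁ ^ p) / p * A ^ p = 1/p * A ^ p - lam₁ * C₁ ^ p / p * A ^ p := by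
    ring
  have e2 : (1 - lam₂ * C₂ ^ q) / q * B ^ q = 1/q * B ^ q - lam₂ * C₂ ^ q / q * B ^ q := by
    ring
  linarith
end

section
/- Suppose λ ∈ (0, λ⋆). Then J(u) > 0 for every u ∈ N⁻ and J(u) < 0 for every u ∈ N⁺. -/
open Finset Filter

-- helpers to be inserted before the theorem
section AuxLemmas

open Real intervalIntegral

lemma bern_aux {a b t : ℝ} (ha : 0 < a) (hab : a ≤ b) (ht : 0 < t) :
    b * (t ^ a - 1) ≤ a * (t ^ b - 1) := by
  have hta : (0:ℝ) < t ^ a := Real.rpow_pos_of_pos ht a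
  have h1 : (1:ℝ) ≤ b / a := (one_le_div ha).2 hab
  have h2 : -1 ≤ t ^ a - 1 := by linarith
  have hb := one_add_mul_self_le_rpow_one_add h2 h1
  have h3 : (1 + (t ^ a - 1)) ^ (b / a) = t ^ b := by
    rw [show 1 + (t ^ a - 1) = t ^ a by ring, ← Real.rpow_mul ht.le]
    congr 1
    field_simp
  rw [h3] at hb
  have := mul_le_mul_of_nonneg_left hb ha.le
  calc b * (t ^ a - 1) = a * (1 + b / a * (t ^ a - 1)) - a := by field_simp; ring
    _ ≤ a * t ^ b - a := by nlinarith
    _ = a * (t ^ b - 1) := by ring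

lemma amgm_aux {γ p α s : ℝ} (hγp : γ < p) (hpα : p < α) (hs : 0 < s) :
    (α - γ) * s ^ p ≤ (α - p) * s ^ γ + (p - γ) * s ^ α := by
  have hαγ : 0 < α - γ := by linarith
  have hαp : 0 < α - p := by linarith
  have hpγ : 0 < p - γ := by linarith
  have hw1 : 0 ≤ (α - p) / (α - γ) := by positivity
  have hw2 : 0 ≤ (p - γ) / (α - γ) := by positivity
  have hw : (α - p) / (α - γ) + (p - γ) / (α - γ) = 1 := by field_simp; ring
  have h := Real.geom_mean_le_arith_mean2_weighted hw1 hw2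
    (Real.rpow_nonneg hs.le γ) (Real.rpow_nonneg hs.le α) hw
  have hg : (s ^ γ) ^ ((α - p) / (α - γ)) * (s ^ α) ^ ((p - γ) / (α - γ)) = s ^ p := by
    rw [← Real.rpow_mul hs.le, ← Real.rpow_mul hs.le, ← Real.rpow_add hs]
    congr 1
    field_simp
    ring
  rw [hg] at h
  have := mul_le_mul_of_nonneg_left h hαγ.le
  calc (α - γ) * s ^ p ≤ (α - γ) * ((α - p)/(α - γ) * s ^ γ + (p - γ)/(α-γ) * s ^ α) := this
    _ = (α - p) * s ^ γ + (p - γ) * s ^ α := by field_simp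

lemma intineq_aux {γ p α t : ℝ} (hγ : 0 < γ) (hγp : γ < p) (hpα : p < α) (ht : 1 ≤ t) :
    0 ≤ p*α*(α-p)*(t^γ-1) + γ*p*(p-γ)*(t^α-1) - γ*α*(α-γ)*(t^p-1) := by
  have hp : 0 < p := hγ.trans hγp
  have hα : 0 < α := hp.trans hpα
  have key : ∀ c : ℝ, 0 < c → (∫ s in (1:ℝ)..t, s ^ (c - 1)) = (t ^ c - 1) / c := by
    intro c hc
    rw [integral_rpow (Or.inl (by linarith))]
    norm_num
  have Ig : IntervalIntegrable (fun s : ℝ => (α-p) * s ^ (γ-1)) MeasureTheory.volume 1 t :=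
    (intervalIntegrable_rpow' (by linarith)).const_mul _
  have Ia : IntervalIntegrable (fun s : ℝ => (p-γ) * s ^ (α-1)) MeasureTheory.volume 1 t :=
    (intervalIntegrable_rpow' (by linarith)).const_mul _
  have Ip : IntervalIntegrable (fun s : ℝ => (α-γ) * s ^ (p-1)) MeasureTheory.volume 1 t :=
    (intervalIntegrable_rpow' (by linarith)).const_mul _
  have hsum : 0 ≤ ∫ s in (1:ℝ)..t,
      ((α-p) * s ^ (γ-1) + (p-γ) * s ^ (α-1) - (α-γ) * s ^ (p-1)) := by
    apply intervalIntegral.integral_nonneg ht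
    intro s hs
    have hs1 : (0:ℝ) < s := lt_of_lt_of_le one_pos hs.1
    have := amgm_aux (γ := γ-1) (p := p-1) (α := α-1)
      (by linarith) (by linarith) hs1
    simp only [show α-1-(γ-1) = α-γ by ring, show α-1-(p-1) = α-p by ring,
      show p-1-(γ-1) = p-γ by ring] at this
    linarith
  rw [intervalIntegral.integral_sub (Ig.add Ia) Ip,
      intervalIntegral.integral_add Ig Ia,
      intervalIntegral.integral_const_mul, intervalIntegral.integral_const_mul,
      intervalIntegral.integral_const_mul,
      key γ hγ, key p hp, key α hα] at hsum
  have h2 := mul_le_mul_of_nonneg_left hsum (by positivity : (0:ℝ) ≤ γ*p*α)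
  calc (0:ℝ) = γ*p*α * 0 := by ring
    _ ≤ γ*p*α * ((α-p) * ((t^γ-1)/γ) + (p-γ) * ((t^α-1)/α) - (α-γ) * ((t^p-1)/p)) := h2
    _ = p*α*(α-p)*(t^γ-1) + γ*p*(p-γ)*(t^α-1) - γ*α*(α-γ)*(t^p-1) := by field_simp

variable {V : Type} [DecidableEq V] (G : GraphSetting V)

lemma GraphSetting.mu_pos (x : V) : 0 < G.mu x := by
  obtain ⟨μ₀, h0, hb⟩ := G.mu_bound
  exact h0.trans_le (hb x)

lemma GraphSetting.gradm_nonneg (m : ℕ) (f : V → ℝ) (x : V) : 0 ≤ G.gradm m f x := by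
  unfold GraphSetting.gradm
  split_ifs
  · exact Real.sqrt_nonneg _
  · exact abs_nonneg _

lemma GraphSetting.integral_nonneg_aux (A : Finset V) (f : V → ℝ)
    (hf : ∀ x ∈ A, 0 ≤ f x) : 0 ≤ G.integral A f :=
  Finset.sum_nonneg fun x hx => mul_nonneg (hf x hx) (G.mu_pos x).le

lemma GraphSetting.lpNorm_nonneg (A : Finset V) (r : ℝ) (f : V → ℝ) :
    0 ≤ G.lpNorm A r f :=
  Real.rpow_nonneg (Finset.sum_nonneg fun x _ =>
    mul_nonneg (Real.rpow_nonneg (abs_nonneg _) r) (G.mu_pos x).le) _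

lemma GraphSetting.sobNorm_nonneg (Ω bΩ : Finset V) (m : ℕ) (s : ℝ) (f : V → ℝ) :
    0 ≤ G.sobNorm Ω bΩ m s f :=
  Real.rpow_nonneg (Finset.sum_nonneg fun x _ =>
    mul_nonneg (Real.rpow_nonneg (G.gradm_nonneg m f x) s) (G.mu_pos x).le) _

lemma GraphSetting.lpNorm_rpow (A : Finset V) {r : ℝ} (hr : 0 < r) (f : V → ℝ) :
    G.lpNorm A r f ^ r = ∑ x ∈ A, |f x| ^ r * G.mu x := by
  unfold GraphSetting.lpNorm
  rw [← Real.rpow_mul (Finset.sum_nonneg fun x _ =>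
    mul_nonneg (Real.rpow_nonneg (abs_nonneg _) r) (G.mu_pos x).le),
    one_div_mul_cancel hr.ne', Real.rpow_one]

lemma GraphSetting.sobNorm_rpow (Ω bΩ : Finset V) (m : ℕ) {s : ℝ} (hs : 0 < s) (f : V → ℝ) :
    G.sobNorm Ω bΩ m s f ^ s = ∑ x ∈ Ω ∪ bΩ, G.gradm m f x ^ s * G.mu x := by
  unfold GraphSetting.sobNorm
  rw [← Real.rpow_mul (Finset.sum_nonneg fun x _ =>
    mul_nonneg (Real.rpow_nonneg (G.gradm_nonneg m f x) s) (G.mu_pos x).le),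
    one_div_mul_cancel hs.ne', Real.rpow_one]

end AuxLemmas

set_option maxHeartbeats 1000000 in
/-- Signs of `J` on the Nehari pieces: for `λ ∈ (0, λ⋆)`, `J > 0` on `N⁻` and `J < 0` on `N⁺`. -/
theorem J_sign_on_nehari_pieces
    {V : Type} [DecidableEq V] (G : GraphSetting V)
    (Ω : Finset V) (hΩ : Ω.Nonempty) (hbΩ : (G.bdry Ω).Nonempty)
    (m : ℕ) (hm : 0 < m)
    (p γ lam α : ℝ) (hγ : 1 < γ) (hγp : γ < p) (hpα : p < α)
    (h c : V → ℝ) (hh : ∀ x ∈ Ω, 0 < h x) (hc : ∀ x ∈ Ω, 0 < c x)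
    (Cmp : ℝ) (hCmp : 0 < Cmp)
    (hemb : ∀ r : ℝ, 1 ≤ r → ∀ u : V → ℝ, suppIn Ω u →
      G.lpNorm Ω r u ≤ Cmp * G.sobNorm Ω (G.bdry Ω) m p u)
    (H₀ C₀ lamS : ℝ) (hH₀ : H₀ = Ω.sup' hΩ h) (hC₀ : C₀ = Ω.sup' hΩ c)
    (hlamS : lamS = γ * (α - p) / (p * α * H₀ * Cmp ^ γ) * (C₀ * Cmp ^ α) ^ ((p - γ) / (p - α)))
    (hlam : 0 < lam) (hlam' : lam < lamS)
    :
    (∀ u : V → ℝ, suppIn Ω u → u ≠ 0 →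
      G.sobNorm Ω (G.bdry Ω) m p u ^ p - lam * G.integral Ω (fun x => h x * |u x| ^ γ)
        - G.integral Ω (fun x => c x * |u x| ^ α) = 0 →
      p * G.sobNorm Ω (G.bdry Ω) m p u ^ p - lam * γ * G.integral Ω (fun x => h x * |u x| ^ γ)
        - α * G.integral Ω (fun x => c x * |u x| ^ α) < 0 →
      0 < G.energyEq Ω (G.bdry Ω) m p γ lam α h c u) ∧
    (∀ u : V → ℝ, suppIn Ω u → u ≠ 0 →
      G.sobNorm Ω (G.bdry Ω) m p u ^ p - lam * G.integral Ω (fun x => h x * |u x| ^ γ)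
        - G.integral Ω (fun x => c x * |u x| ^ α) = 0 →
      0 < p * G.sobNorm Ω (G.bdry Ω) m p u ^ p - lam * γ * G.integral Ω (fun x => h x * |u x| ^ γ)
        - α * G.integral Ω (fun x => c x * |u x| ^ α) →
      G.energyEq Ω (G.bdry Ω) m p γ lam α h c u < 0) := by
  have hγ0 : (0:ℝ) < γ := lt_trans one_pos hγ
  have hp0 : (0:ℝ) < p := lt_trans hγ0 hγp
  have hα0 : (0:ℝ) < α := lt_trans hp0 hpα
  have hγα : γ < α := hγp.trans hpα
  obtain ⟨x₀, hx₀⟩ := hΩ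
  have hH0pos : 0 < H₀ := by
    rw [hH₀]; exact lt_of_lt_of_le (hh x₀ hx₀) (Finset.le_sup' h hx₀)
  have hC0pos : 0 < C₀ := by
    rw [hC₀]; exact lt_of_lt_of_le (hc x₀ hx₀) (Finset.le_sup' c hx₀)
  have hhle : ∀ x ∈ Ω, h x ≤ H₀ := fun x hx => hH₀ ▸ Finset.le_sup' h hx
  have hcle : ∀ x ∈ Ω, c x ≤ C₀ := fun x hx => hC₀ ▸ Finset.le_sup' c hx
  have hpαne : p - α ≠ 0 := sub_ne_zero_of_ne hpα.ne
  set K := C₀ * Cmp ^ α with hKdef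
  have hK : 0 < K := mul_pos hC0pos (Real.rpow_pos_of_pos hCmp α)
  set sstar := K ^ (1/(p-α)) with hsdef
  have hss : 0 < sstar := Real.rpow_pos_of_pos hK _
  -- power identities for sstar
  have hexp1 : sstar ^ (γ - p) = K ^ (-((p-γ)/(p-α))) := by
    rw [hsdef, ← Real.rpow_mul hK.le]
    congr 1
    field_simp; ring
  have hsγp : K ^ ((p-γ)/(p-α)) * sstar ^ (γ - p) = 1 := by
    rw [hexp1, ← Real.rpow_add hK]
    simp
  have hexp2 : sstar ^ (α - p) = K⁻¹ := by
    rw [hsdef, ← Real.rpow_mul hK.le, show 1/(p-α)*(α-p) = -1 by field_simp; ring,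
      Real.rpow_neg_one]
  have hsα : K * sstar ^ α = sstar ^ p := by
    have hsplit : sstar ^ α = sstar ^ (α - p) * sstar ^ p := by
      rw [← Real.rpow_add hss]; congr 1; ring
    rw [hsplit, hexp2, ← mul_assoc, mul_inv_cancel₀ hK.ne', one_mul]
  have hsγ : K ^ ((p-γ)/(p-α)) * sstar ^ γ = sstar ^ p := by
    have hsplit : sstar ^ γ = sstar ^ (γ - p) * sstar ^ p := by
      rw [← Real.rpow_add hss]; congr 1; ring
    rw [hsplit, ← mul_assoc, hsγp, one_mul]
  have hlamSval : lamS * (H₀ * Cmp ^ γ * sstar ^ γ) = γ*(α-p)/(p*α) * sstar ^ p := by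
    rw [hlamS, ← hsγ]
    have h1 : (0:ℝ) < Cmp ^ γ := Real.rpow_pos_of_pos hCmp γ
    field_simp
  -- shared embedding bound
  have embBound : ∀ (r : ℝ), 1 ≤ r → ∀ (w : V → ℝ) (W₀ : ℝ), (∀ x ∈ Ω, 0 ≤ w x) →
      (∀ x ∈ Ω, w x ≤ W₀) → ∀ u : V → ℝ, suppIn Ω u →
      G.integral Ω (fun x => w x * |u x| ^ r) ≤
        W₀ * Cmp ^ r * G.sobNorm Ω (G.bdry Ω) m p u ^ r := by
    intro r hr w W₀ hw hwW u hsupp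
    have hr0 : (0:ℝ) < r := lt_of_lt_of_le one_pos hr
    have hS0 := G.sobNorm_nonneg Ω (G.bdry Ω) m p u
    have hW0 : 0 ≤ W₀ := le_trans (hw x₀ hx₀) (hwW x₀ hx₀)
    have step1 : G.integral Ω (fun x => w x * |u x| ^ r) ≤
        W₀ * ∑ x ∈ Ω, |u x| ^ r * G.mu x := by
      unfold GraphSetting.integral
      rw [Finset.mul_sum]
      apply Finset.sum_le_sum
      intro x hx
      have h1 : 0 ≤ |u x| ^ r * G.mu x :=
        mul_nonneg (Real.rpow_nonneg (abs_nonneg _) r) (G.mu_pos x).le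
      calc w x * |u x| ^ r * G.mu x = w x * (|u x| ^ r * G.mu x) := by ring
        _ ≤ W₀ * (|u x| ^ r * G.mu x) := mul_le_mul_of_nonneg_right (hwW x hx) h1
    have step2 : (∑ x ∈ Ω, |u x| ^ r * G.mu x) ≤
        (Cmp * G.sobNorm Ω (G.bdry Ω) m p u) ^ r := by
      rw [← G.lpNorm_rpow Ω hr0 u]
      exact Real.rpow_le_rpow (G.lpNorm_nonneg Ω r u) (hemb r hr u hsupp) hr0.le
    calc G.integral Ω (fun x => w x * |u x| ^ r) ≤ W₀ * ∑ x ∈ Ω, |u x| ^ r * G.mu x := step1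
      _ ≤ W₀ * (Cmp * G.sobNorm Ω (G.bdry Ω) m p u) ^ r :=
          mul_le_mul_of_nonneg_left step2 hW0
      _ = W₀ * Cmp ^ r * G.sobNorm Ω (G.bdry Ω) m p u ^ r := by
          rw [Real.mul_rpow hCmp.le hS0]; ring
  -- positivity of the Sobolev norm for nonzero u
  have sobPos : ∀ u : V → ℝ, suppIn Ω u → u ≠ 0 →
      0 < G.sobNorm Ω (G.bdry Ω) m p u := by
    intro u hsupp hu
    rcases (G.sobNorm_nonneg Ω (G.bdry Ω) m p u).lt_or_eq with hlt | heq
    · exact hlt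
    · exfalso
      apply hu
      have hle := hemb p (by linarith : (1:ℝ) ≤ p) u hsupp
      rw [← heq, mul_zero] at hle
      have h0 : G.lpNorm Ω p u = 0 := le_antisymm hle (G.lpNorm_nonneg Ω p u)
      have h1 : (∑ x ∈ Ω, |u x| ^ p * G.mu x) = 0 := by
        rw [← G.lpNorm_rpow Ω hp0 u, h0, Real.zero_rpow hp0.ne']
      have h2 := (Finset.sum_eq_zero_iff_of_nonneg (fun x _ =>
        mul_nonneg (Real.rpow_nonneg (abs_nonneg _) p) (G.mu_pos x).le)).1 h1
      funext x
      by_cases hx : x ∈ Ω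
      · have h3 := h2 x hx
        rcases mul_eq_zero.1 h3 with h4 | h4
        · have h5 := (Real.rpow_eq_zero_iff_of_nonneg (abs_nonneg (u x))).1 h4
          simpa using abs_eq_zero.1 h5.1
        · exact absurd h4 (G.mu_pos x).ne'
      · exact hsupp x hx
  have hhle0 : ∀ x ∈ Ω, 0 ≤ h x := fun x hx => (hh x hx).le
  have hcle0 : ∀ x ∈ Ω, 0 ≤ c x := fun x hx => (hc x hx).le
  -- helper: positive factor cancellation
  have posfactor : ∀ d e : ℝ, 0 < d → 0 < d * e → 0 < e := by
    intro d e hd hde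
    rcases mul_pos_iff.1 hde with ⟨_, h1⟩ | ⟨h1, _⟩
    · exact h1
    · linarith
  constructor
  · -- N⁻ : J > 0
    intro u hsupp hu hN hNeg
    have hSpos := sobPos u hsupp hu
    have hIHle := embBound γ hγ.le h H₀ hhle0 hhle u hsupp
    have hICle := embBound α (by linarith : (1:ℝ) ≤ α) c C₀ hcle0 hcle u hsupp
    set S := G.sobNorm Ω (G.bdry Ω) m p u with hSdef
    set IH := G.integral Ω (fun x => h x * |u x| ^ γ) with hIHdef
    set IC := G.integral Ω (fun x => c x * |u x| ^ α) with hICdef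
    have hTpos : 0 < S ^ p := Real.rpow_pos_of_pos hSpos p
    set T := S ^ p with hTdef
    have hTeq : T - IC = lam * IH := by linarith [hN]
    -- scaling point
    set t := sstar / S with htdef
    have ht : 0 < t := div_pos hss hSpos
    have hta : ∀ r : ℝ, t ^ r * S ^ r = sstar ^ r := by
      intro r
      have hSr : (0:ℝ) < S ^ r := Real.rpow_pos_of_pos hSpos r
      rw [htdef, Real.div_rpow hss.le hSpos.le]
      field_simp
    set a1 := t ^ γ with ha1def
    set a2 := t ^ p with ha2def
    set a3 := t ^ α with ha3def
    have ha1 : 0 < a1 := Real.rpow_pos_of_pos ht γ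
    have ha2 : 0 < a2 := Real.rpow_pos_of_pos ht p
    have ha3 : 0 < a3 := Real.rpow_pos_of_pos ht α
    have ha2T : a2 * T = sstar ^ p := by rw [ha2def, hTdef]; exact hta p
    clear_value S IH IC T t a1 a2 a3
    have hXb : a1 * (T - IC) ≤ lam * (H₀ * Cmp ^ γ) * sstar ^ γ := by
      rw [hTeq]
      calc a1 * (lam * IH) ≤ a1 * (lam * (H₀ * Cmp ^ γ * S ^ γ)) := by
            apply mul_le_mul_of_nonneg_left _ ha1.le
            exact mul_le_mul_of_nonneg_left hIHle hlam.le
        _ = lam * (H₀ * Cmp ^ γ) * (a1 * S ^ γ) := by ring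
        _ = lam * (H₀ * Cmp ^ γ) * sstar ^ γ := by rw [ha1def, hta γ]
    have hstrict : lam * (H₀ * Cmp ^ γ) * sstar ^ γ < γ*(α-p)/(p*α) * sstar ^ p := by
      rw [← hlamSval]
      have hpos : 0 < H₀ * Cmp ^ γ * sstar ^ γ := by positivity
      calc lam * (H₀ * Cmp ^ γ) * sstar ^ γ = lam * (H₀ * Cmp ^ γ * sstar ^ γ) := by ring
        _ < lamS * (H₀ * Cmp ^ γ * sstar ^ γ) := mul_lt_mul_of_pos_right hlam' hpos
    have hBb : a3 * IC ≤ sstar ^ p := by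
      calc a3 * IC ≤ a3 * (K * S ^ α) := mul_le_mul_of_nonneg_left hICle ha3.le
        _ = K * (a3 * S ^ α) := by ring
        _ = K * sstar ^ α := by rw [ha3def, hta α]
        _ = sstar ^ p := hsα
    have hjp : 0 < γ*α*(a2*T) - p*α*(a1*(T-IC)) - γ*p*(a3*IC) := by
      have h1 : p*α*(a1*(T-IC)) < p*α*(γ*(α-p)/(p*α) * sstar ^ p) :=
        mul_lt_mul_of_pos_left (lt_of_le_of_lt hXb hstrict) (by positivity)
      have h2 : p*α*(γ*(α-p)/(p*α)*sstar^p) = γ*(α-p)*sstar^p := by field_simp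
      rw [h2] at h1
      have h3 : γ*p*(a3*IC) ≤ γ*p*sstar^p :=
        mul_le_mul_of_nonneg_left hBb (by positivity)
      have h4 : γ*α*(a2*T) = γ*α*sstar^p := by rw [ha2T]
      linarith [h1, h3, h4]
    have hNeg' : p*T - γ*(T-IC) - α*IC < 0 := by
      rw [hTeq]
      calc p*T - γ*(lam*IH) - α*IC = p*T - lam*γ*IH - α*IC := by ring
        _ < 0 := hNeg
    have hJeq : G.energyEq Ω (G.bdry Ω) m p γ lam α h c u =
        (γ*α*T - p*α*(T-IC) - γ*p*IC) / (γ*p*α) := by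
      unfold GraphSetting.energyEq
      rw [← hSdef, ← hIHdef, ← hICdef, ← hTdef, hTeq]
      field_simp
    rw [hJeq]
    apply div_pos _ (by positivity)
    rcases le_total sstar S with hle | hle
    · -- t ≤ 1
      have ht1 : t ≤ 1 := by rw [htdef]; exact (div_le_one hSpos).2 hle
      have ha21 : a2 ≤ a1 := by
        rw [ha1def, ha2def]; exact Real.rpow_le_rpow_of_exponent_ge ht ht1 hγp.le
      have ha31 : a3 ≤ a1 := by
        rw [ha1def, ha3def]; exact Real.rpow_le_rpow_of_exponent_ge ht ht1 hγα.le
      have hAM : (α-γ)*a2 ≤ (α-p)*a1 + (p-γ)*a3 := by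
        rw [ha1def, ha2def, ha3def]; exact amgm_aux hγp hpα ht
      have hB2 : α*(a1-1) ≤ γ*(a3-1) := by
        rw [ha1def, ha3def]; exact bern_aux hγ0 hγα.le ht
      have hD : 0 < α*a1 - γ*a3 := by
        have hh1 : γ*a3 ≤ γ*a1 := mul_le_mul_of_nonneg_left ha31 hγ0.le
        have hh2 : 0 < (α-γ)*a1 := mul_pos (by linarith) ha1
        linarith
      have hBD : α*T*(p*a1-γ*a2) < p*IC*(α*a1-γ*a3) := by linarith [hjp]
      have hAMs : 0 ≤ (α-p)*a1 - (α-γ)*a2 + (p-γ)*a3 := by linarith [hAM]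
      have hterm2 : 0 ≤ α*T*(γ*((α-p)*a1 - (α-γ)*a2 + (p-γ)*a3)) :=
        mul_nonneg (mul_nonneg hα0.le hTpos.le) (mul_nonneg hγ0.le hAMs)
      have hterm3 : 0 ≤ (p*IC*(α*a1-γ*a3) - α*T*(p*a1-γ*a2)) * ((α-γ)-(α*a1-γ*a3)) :=
        mul_nonneg (by linarith [hBD]) (by linarith [hB2])
      have hDJP : 0 < (α*a1-γ*a3) * (γ*α*T - p*α*(T-IC) - γ*p*IC) := by
        linarith [mul_pos hD hjp, hterm2, hterm3]
      exact posfactor _ _ hD hDJP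
    · -- t ≥ 1
      have ht1 : 1 ≤ t := by rw [htdef]; exact (one_le_div hSpos).2 hle
      have hII : 0 ≤ p*α*(α-p)*(a1-1) + γ*p*(p-γ)*(a3-1) - γ*α*(α-γ)*(a2-1) := by
        rw [ha1def, ha2def, ha3def]; exact intineq_aux hγ0 hγp hpα ht1
      have hB2 : α*(a1-1) ≤ γ*(a3-1) := by
        rw [ha1def, ha3def]; exact bern_aux hγ0 hγα.le ht
      have hNeg2 : (p-γ)*T < (α-γ)*IC := by linarith [hNeg']
      have h6 : 0 ≤ p*(γ*(a3-1) - α*(a1-1)) := mul_nonneg hp0.le (by linarith [hB2])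
      have h7 := mul_le_mul_of_nonneg_right hNeg2.le h6
      have h8 : 0 ≤ T*(p*α*(α-p)*(a1-1) + γ*p*(p-γ)*(a3-1) - γ*α*(α-γ)*(a2-1)) :=
        mul_nonneg hTpos.le hII
      have hfin : 0 < (α-γ) * (γ*α*T - p*α*(T-IC) - γ*p*IC) := by
        linarith [mul_pos (show (0:ℝ) < α-γ by linarith) hjp, h7, h8]
      exact posfactor _ _ (show (0:ℝ) < α-γ by linarith) hfin
  · -- N⁺ : J < 0
    intro u hsupp hu hN hPos
    have hSpos := sobPos u hsupp hu
    set S := G.sobNorm Ω (G.bdry Ω) m p u with hSdef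
    set IH := G.integral Ω (fun x => h x * |u x| ^ γ) with hIHdef
    set IC := G.integral Ω (fun x => c x * |u x| ^ α) with hICdef
    have hTpos : 0 < S ^ p := Real.rpow_pos_of_pos hSpos p
    set T := S ^ p with hTdef
    have hTeq : T - IC = lam * IH := by linarith [hN]
    clear_value S IH IC T
    have hJeq : G.energyEq Ω (G.bdry Ω) m p γ lam α h c u =
        (γ*α*T - p*α*(T-IC) - γ*p*IC) / (γ*p*α) := by
      unfold GraphSetting.energyEq
      rw [← hSdef, ← hIHdef, ← hICdef, ← hTdef, hTeq]
      field_simp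
    rw [hJeq]
    apply div_neg_of_neg_of_pos _ (by positivity)
    have hPos' : 0 < p*T - γ*(T-IC) - α*IC := by
      rw [hTeq]
      calc (0:ℝ) < p*T - lam*γ*IH - α*IC := hPos
        _ = p*T - γ*(lam*IH) - α*IC := by ring
    have hPos'' : 0 < (p-γ)*T - (α-γ)*IC := by linarith [hPos']
    have hint1 : 0 < (α-p)*(T*(p-γ)) :=
      mul_pos (by linarith) (mul_pos hTpos (by linarith))
    have hint2 : 0 < p*((p-γ)*T - (α-γ)*IC) := mul_pos hp0 hPos''
    linarith [hint1, hint2]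
end
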